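/- Let M_t be an evolving surface with parametrisation x : Ω × I → R^3, f̃ smooth data on M_t with coordinate representation f(x,t) = f̃(x(x,t),t), and γ a family of trajectories given in coordinates by β (i.e., γ(x(x0,0),t) = x(β(x0,t),t)). Then the parametrised optical flow constraint ∇^2 f · β̇ + ∂_t f = 0 holds at a point if and only if the intrinsic optical flow constraint ∇_M f̃ · γ̇_tan + d^{n}_t f̃ = 0 holds at the corresponding surface point, where γ̇_tan = ẋ_tan + J β̇. -/

import Mathlib

open Matrix

/-- Chain rule: velocity of t ↦ x (β t) t equals ẋ + J β̇. -/
lemma chain_aux (x : (Fin 2 → ℝ) → ℝ → Fin 3 → ℝ)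
    (hx : ContDiff ℝ (⊤ : ℕ∞) (fun pt : (Fin 2 → ℝ) × ℝ => x pt.1 pt.2))
    (p : Fin 2 → ℝ) (t₀ : ℝ)
    (β : ℝ → Fin 2 → ℝ) (hβ : Differentiable ℝ β) (hβ0 : β t₀ = p)
    (J : Matrix (Fin 3) (Fin 2) ℝ)
    (hJ : ∀ i j, J i j = fderiv ℝ (fun q => x q t₀ i) p (Pi.single j 1)) :
    deriv (fun t => x (β t) t) t₀
      = deriv (fun t => x p t) t₀ + J.mulVec (deriv β t₀) := by
  set F : (Fin 2 → ℝ) × ℝ → Fin 3 → ℝ := fun pt => x pt.1 pt.2 with hF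
  have hFd : DifferentiableAt ℝ F (p, t₀) := (hx.differentiable (by simp)) (p, t₀)
  set D := fderiv ℝ F (p, t₀) with hD
  set b := deriv β t₀ with hb
  have hβ' : HasDerivAt β b t₀ := (hβ t₀).hasDerivAt
  -- Step A: γdot = D (b, 1)
  have hA : HasDerivAt (fun t => x (β t) t) (D (b, 1)) t₀ := by
    have h1 : HasDerivAt (fun t => (β t, t)) (b, 1) t₀ := hβ'.prodMk (hasDerivAt_id t₀)
    have h2 : HasDerivAt (F ∘ fun t => (β t, t)) (D (b, 1)) t₀ :=
      hFd.hasFDerivAt.comp_hasDerivAt_of_eq (f := fun t => (β t, t)) t₀ h1 (by simp [hβ0])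
    exact h2
  -- Step B: xdot = D (0, 1)
  have hB : HasDerivAt (fun t => x p t) (D (0, 1)) t₀ := by
    have h1 : HasDerivAt (fun t : ℝ => ((p : Fin 2 → ℝ), t)) ((0 : Fin 2 → ℝ), 1) t₀ :=
      (hasDerivAt_const t₀ p).prodMk (hasDerivAt_id t₀)
    have := hFd.hasFDerivAt.comp_hasDerivAt t₀ h1
    exact this
  -- Step C: spatial fderiv
  have hC : ∀ v : Fin 2 → ℝ, fderiv ℝ (fun q => x q t₀) p v = D (v, 0) := by
    intro v
    have h1 : HasFDerivAt (fun q : Fin 2 → ℝ => (q, t₀))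
        ((ContinuousLinearMap.id ℝ (Fin 2 → ℝ)).prod 0) p :=
      (hasFDerivAt_id p).prodMk (hasFDerivAt_const t₀ p)
    have h2 : HasFDerivAt (fun q : Fin 2 → ℝ => x q t₀)
        (D.comp ((ContinuousLinearMap.id ℝ (Fin 2 → ℝ)).prod 0)) p :=
      by have := hFd.hasFDerivAt.comp p h1; exact this
    rw [h2.fderiv]
    rfl
  -- Step E: D (v, 0) = J.mulVec v
  have hE : ∀ v : Fin 2 → ℝ, D (v, 0) = J.mulVec v := by
    intro v
    have hdx : DifferentiableAt ℝ (fun q => x q t₀) p := by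
      have h2 : HasFDerivAt (fun q : Fin 2 → ℝ => x q t₀)
          (D.comp ((ContinuousLinearMap.id ℝ (Fin 2 → ℝ)).prod 0)) p :=
        by have := hFd.hasFDerivAt.comp p ((hasFDerivAt_id p).prodMk (hasFDerivAt_const t₀ p) : HasFDerivAt (fun q : Fin 2 → ℝ => (q, t₀)) ((ContinuousLinearMap.id ℝ (Fin 2 → ℝ)).prod 0) p); exact this
      exact h2.differentiableAt
    have hcomp : ∀ i v, fderiv ℝ (fun q => x q t₀ i) p v
        = fderiv ℝ (fun q => x q t₀) p v i := by
      intro i v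
      have h := (ContinuousLinearMap.proj (R := ℝ) (φ := fun _ : Fin 3 => ℝ) i).hasFDerivAt.comp
        p hdx.hasFDerivAt
      have h2 : HasFDerivAt (fun q => x q t₀ i)
          ((ContinuousLinearMap.proj (R := ℝ) (φ := fun _ : Fin 3 => ℝ) i).comp
            (fderiv ℝ (fun q => x q t₀) p)) p := h
      rw [h2.fderiv]
      rfl
    rw [← hC v]
    funext i
    rw [← hcomp i v]
    have hvsum : v = ∑ j, v j • (Pi.single j 1 : Fin 2 → ℝ) := by
      funext k
      simp [Pi.single_apply, Finset.sum_apply, eq_comm]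
    have hdxi : DifferentiableAt ℝ (fun q => x q t₀ i) p := by
      have : (fun q => x q t₀ i) = (fun w : Fin 3 → ℝ => w i) ∘ (fun q => x q t₀) := rfl
      rw [this]
      exact ((ContinuousLinearMap.proj (R := ℝ) (φ := fun _ : Fin 3 => ℝ) i).differentiableAt).comp p hdx
    set L := fderiv ℝ (fun q => x q t₀ i) p
    calc L v = L (∑ j, v j • (Pi.single j 1 : Fin 2 → ℝ)) := by rw [← hvsum]
      _ = ∑ j, v j • L (Pi.single j 1) := by rw [map_sum]; simp
      _ = ∑ j, J i j * v j := by simp [hJ, mul_comm, L]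
      _ = J.mulVec v i := by simp [Matrix.mulVec, dotProduct]
  rw [hA.deriv, hB.deriv, show ((b,1) : (Fin 2 → ℝ) × ℝ) = (0,1) + (b,0) by simp,
    map_add, hE]


/-- Equivalence of the parametrised optical flow constraint ∇²f·β̇ + ∂ₜf = 0 and the
intrinsic constraint ∇_M f̃ · γ̇_tan + d^n_t f̃ = 0, where x parametrises the evolving
surface, J is the spatial Jacobian, g = JᵀJ, n the unit normal, ∇_M f̃ = J g⁻¹ ∇²f,
γ̇ is the velocity of the trajectory t ↦ x(β(t),t), γ̇_tan its tangential projection,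
and the normal time derivative d^n_t f̃ is determined by d^{ẋ}_t f̃ = ∇_M f̃·ẋ + d^n_t f̃
with d^{ẋ}_t f̃ = ∂ₜf. -/

theorem stmt9 (x : (Fin 2 → ℝ) → ℝ → Fin 3 → ℝ)
    (hx : ContDiff ℝ (⊤ : ℕ∞) (fun pt : (Fin 2 → ℝ) × ℝ => x pt.1 pt.2))
    (f : (Fin 2 → ℝ) → ℝ → ℝ)
    (hf : ContDiff ℝ (⊤ : ℕ∞) (fun pt : (Fin 2 → ℝ) × ℝ => f pt.1 pt.2))
    (p : Fin 2 → ℝ) (t₀ : ℝ)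
    (β : ℝ → Fin 2 → ℝ) (hβ : Differentiable ℝ β) (hβ0 : β t₀ = p)
    (J : Matrix (Fin 3) (Fin 2) ℝ)
    (hJ : ∀ i j, J i j = fderiv ℝ (fun q => x q t₀ i) p (Pi.single j 1))
    (g : Matrix (Fin 2) (Fin 2) ℝ) (hg : g = Jᵀ * J) (hdet : IsUnit g.det)
    (n : Fin 3 → ℝ) (hn : ∑ i, n i ^ 2 = 1) (hnJ : ∀ j, ∑ i, n i * J i j = 0)
    (df : Fin 2 → ℝ) (hdf : ∀ j, df j = fderiv ℝ (fun q => f q t₀) p (Pi.single j 1))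
    (ft : ℝ) (hft : ft = deriv (fun t => f p t) t₀)
    (gradM : Fin 3 → ℝ) (hgM : gradM = J.mulVec (g⁻¹.mulVec df))
    (xdot γdot : Fin 3 → ℝ)
    (hxdot : xdot = deriv (fun t => x p t) t₀)
    (hγdot : γdot = deriv (fun t => x (β t) t) t₀)
    (γtan : Fin 3 → ℝ) (hγtan : γtan = γdot - (∑ i, γdot i * n i) • n)
    (dn : ℝ) (hdn : dn = ft - ∑ i, gradM i * xdot i) :
    (df ⬝ᵥ deriv β t₀ + ft = 0) ↔ ((∑ i, gradM i * γtan i) + dn = 0) := by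
  set b := deriv β t₀ with hb
  have hchain : γdot = xdot + J.mulVec b := by
    rw [hγdot, hxdot, chain_aux x hx p t₀ β hβ hβ0 J hJ]
  have hfact1 : ∑ i, gradM i * n i = 0 := by
    show gradM ⬝ᵥ n = 0
    rw [hgM, dotProduct_comm, Matrix.dotProduct_mulVec]
    have hz : Matrix.vecMul n J = 0 := by
      funext j
      simpa [Matrix.vecMul, dotProduct] using hnJ j
    rw [hz, zero_dotProduct]
  have hfact2 : ∑ i, gradM i * J.mulVec b i = df ⬝ᵥ b := by
    show gradM ⬝ᵥ J.mulVec b = df ⬝ᵥ b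
    rw [hgM, Matrix.dotProduct_mulVec, ← Matrix.mulVec_transpose,
      Matrix.mulVec_mulVec, ← hg, Matrix.mulVec_mulVec,
      Matrix.mul_nonsing_inv g hdet, Matrix.one_mulVec]
  have key : (∑ i, gradM i * γtan i) + dn = df ⬝ᵥ b + ft := by
    have hsum : (∑ i, gradM i * γtan i)
        = (∑ i, gradM i * xdot i) + (∑ i, gradM i * J.mulVec b i)
          - (∑ k, γdot k * n k) * (∑ i, gradM i * n i) := by
      rw [Finset.mul_sum, ← Finset.sum_add_distrib, ← Finset.sum_sub_distrib]
      apply Finset.sum_congr rfl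
      intro i _
      rw [hγtan, hchain]
      simp [Pi.sub_apply, Pi.add_apply, Pi.smul_apply, smul_eq_mul]
      ring
    rw [hsum, hfact1, hfact2, hdn]
    ring
  rw [key]
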